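/- Let n ≥ 1 and 0 ≤ s ≤ n−1, and fix w ∈ ℂ. Then the s-th ∂̄-derivative in z of the polyanalytic Fock kernel of order n satisfies ∂̄_z^s F_n(z,w) = (−1)^s (z−w)^s e^{z·conj(w)} Σ_{u=0}^{n−s−1} ((−1)^u/u!) binom(n, u+s+1) |z−w|^{2u} for all z ∈ ℂ. In particular, for s = n−1, ∂̄_z^{n−1} F_n(z,w) = (−1)^{n−1} (z−w)^{n−1} e^{z·conj(w)}. -/

import Mathlib

/-- The Wirtinger (Cauchy–Riemann) operator `∂̄u(z) = (1/2)(∂u/∂x + i ∂u/∂y)`. -/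
noncomputable def dbar (u : ℂ → ℂ) (z : ℂ) : ℂ :=
  (1 / 2) * (fderiv ℝ u z 1 + Complex.I * fderiv ℝ u z Complex.I)

/-- The polyanalytic Fock kernel of order `n`:
`F_n(z,w) = e^{z w̄} Σ_{k=0}^{n−1} ((−1)^k/k!) C(n,k+1) |z−w|^{2k}`. -/
noncomputable def FockK (n : ℕ) (z w : ℂ) : ℂ :=
  Complex.exp (z * (starRingEnd ℂ) w) *
    ∑ k ∈ Finset.range n,
      ((-1) ^ k / (k.factorial : ℂ)) * (n.choose (k + 1)) * ((‖z - w‖ ^ (2 * k) : ℝ) : ℂ)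

/-!
Since `|z − w|^{2k} = (z − w)^k (z̄ − w̄)^k`, the kernel is a finite sum of products `h(z) · p(z̄)`
with `h` entire and `p` a polynomial. On such a product `∂̄` annihilates `h` and differentiates `p`,
so `∂̄^s` turns `(z̄ − w̄)^k` into `k (k − 1) ⋯ (k − s + 1) (z̄ − w̄)^{k − s}`. The terms with
`k < s` vanish, and reindexing `k = u + s` gives the formula.
-/

open Complex ComplexConjugate Finset Polynomial

theorem dbar_mul {u v : ℂ → ℂ} {z : ℂ} (hu : DifferentiableAt ℝ u z)
    (hv : DifferentiableAt ℝ v z) :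
    dbar (fun z => u z * v z) z = dbar u z * v z + u z * dbar v z := by
  simp only [dbar, fderiv_fun_mul hu hv, add_apply, smul_apply, smul_eq_mul]
  ring

theorem dbar_sum {ι : Type*} (t : Finset ι) {f : ι → ℂ → ℂ} {z : ℂ}
    (h : ∀ i ∈ t, DifferentiableAt ℝ (f i) z) :
    dbar (fun z => ∑ i ∈ t, f i z) z = ∑ i ∈ t, dbar (f i) z := by
  simp only [dbar, fderiv_fun_sum h, _root_.sum_apply, Finset.mul_sum,
    ← Finset.sum_add_distrib]

theorem DifferentiableAt.dbar_eq_zero {f : ℂ → ℂ} {z : ℂ} (hf : DifferentiableAt ℂ f z) :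
    dbar f z = 0 := by
  rw [dbar, hf.hasDerivAt.hasFDerivAt.restrictScalars ℝ |>.fderiv]
  simp only [ContinuousLinearMap.coe_restrictScalars', ContinuousLinearMap.toSpanSingleton_apply,
    smul_eq_mul]
  linear_combination (deriv f z / 2) * I_mul_I

theorem dbar_comp_conj {g : ℂ → ℂ} {z : ℂ} (hg : DifferentiableAt ℂ g (conj z)) :
    dbar (fun z => g (conj z)) z = deriv g (conj z) := by
  have h : HasFDerivAt (fun z => g (conj z))
      (((fderiv ℂ g (conj z)).restrictScalars ℝ).comp conjCLE.toContinuousLinearMap) z :=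
    (hg.hasFDerivAt.restrictScalars ℝ).comp z conjCLE.hasFDerivAt
  rw [dbar, h.fderiv]
  simp only [ContinuousLinearMap.comp_apply, ContinuousLinearEquiv.coe_coe,
    ContinuousAlgEquiv.coeCLE_apply, conjCAE_apply, map_one, conj_I,
    ContinuousLinearMap.coe_restrictScalars', fderiv_eq_smul_deriv, smul_eq_mul]
  linear_combination -(deriv g (conj z) / 2) * I_mul_I

theorem dbar_mul_eval_conj {f : ℂ → ℂ} {z : ℂ} (hf : DifferentiableAt ℂ f z) (p : ℂ[X]) :
    dbar (fun z => f z * p.eval (conj z)) z = f z * p.derivative.eval (conj z) := by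
  have hp : DifferentiableAt ℝ (fun z => p.eval (conj z)) z :=
    (p.differentiableAt.restrictScalars ℝ).comp z conjCLE.differentiableAt
  rw [dbar_mul (hf.restrictScalars ℝ) hp, hf.dbar_eq_zero, dbar_comp_conj p.differentiableAt,
    p.deriv, zero_mul, zero_add]

theorem iterate_dbar_sum_mul_eval_conj {ι : Type*} (t : Finset ι) {f : ι → ℂ → ℂ}
    (hf : ∀ i ∈ t, Differentiable ℂ (f i)) (p : ι → ℂ[X]) (s : ℕ) :
    dbar^[s] (fun z => ∑ i ∈ t, f i z * (p i).eval (conj z)) =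
      fun z => ∑ i ∈ t, f i z * (derivative^[s] (p i)).eval (conj z) := by
  induction s generalizing p with
  | zero => rfl
  | succ s ih =>
    have hdbar : dbar (fun z => ∑ i ∈ t, f i z * (p i).eval (conj z)) =
        fun z => ∑ i ∈ t, f i z * (p i).derivative.eval (conj z) := by
      funext z
      rw [dbar_sum]
      · exact sum_congr rfl fun i hi => dbar_mul_eval_conj (hf i hi z) (p i)
      · exact fun i hi => ((hf i hi z).restrictScalars ℝ).mul
          ((p i).differentiableAt.restrictScalars ℝ |>.comp z conjCLE.differentiableAt)
    simp only [Function.iterate_succ_apply, hdbar, ih]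

theorem ofReal_norm_sub_pow_two_mul (z w : ℂ) (k : ℕ) :
    ((‖z - w‖ ^ (2 * k) : ℝ) : ℂ) = (z - w) ^ k * (conj z - conj w) ^ k := by
  rw [← map_sub, ← mul_pow, mul_conj, normSq_eq_norm_sq, pow_mul]
  push_cast
  rfl

theorem FockK_eq_sum_mul_eval_conj (n : ℕ) (z w : ℂ) :
    FockK n z w = ∑ k ∈ range n,
      ((-1) ^ k / (k.factorial : ℂ) * n.choose (k + 1) * exp (z * conj w) * (z - w) ^ k) *
        ((X - C (conj w)) ^ k).eval (conj z) := by
  simp only [FockK, mul_sum, ofReal_norm_sub_pow_two_mul, eval_pow, eval_sub, eval_X, eval_C]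
  exact sum_congr rfl fun k _ => by ring

theorem Finset.sum_range_eq_sum_range_tsub_of_eq_zero {M : Type*} [AddCommMonoid M]
    {f : ℕ → M} {s : ℕ} (hf : ∀ k < s, f k = 0) (n : ℕ) :
    ∑ k ∈ range n, f k = ∑ u ∈ range (n - s), f (u + s) := by
  rcases le_total s n with hsn | hns
  · obtain ⟨m, rfl⟩ := exists_add_of_le hsn
    rw [sum_range_add, sum_eq_zero fun k hk => hf k (mem_range.1 hk), zero_add,
      add_tsub_cancel_left]
    simp only [add_comm]
  · rw [tsub_eq_zero_of_le hns, sum_range_zero]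
    exact sum_eq_zero fun k hk => hf k ((mem_range.1 hk).trans_le hns)

theorem iterate_dbar_FockK (n s : ℕ) (w z : ℂ) :
    dbar^[s] (fun z' => FockK n z' w) z =
      (-1) ^ s * (z - w) ^ s * exp (z * conj w) *
        ∑ u ∈ range (n - s),
          ((-1) ^ u / (u.factorial : ℂ)) * (n.choose (u + s + 1)) *
            ((‖z - w‖ ^ (2 * u) : ℝ) : ℂ) := by
  simp only [FockK_eq_sum_mul_eval_conj]
  rw [iterate_dbar_sum_mul_eval_conj _ (fun k _ => by fun_prop)]
  simp only [iterate_derivative_X_sub_pow, nsmul_eq_mul, eval_natCast_mul, eval_pow, eval_sub,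
    eval_X, eval_C]
  rw [sum_range_eq_sum_range_tsub_of_eq_zero (s := s)
    (fun k hk => by simp [Nat.descFactorial_eq_zero_iff_lt.2 hk]), mul_sum]
  refine sum_congr rfl fun u _ => ?_
  have hfac : ((u + s).factorial : ℂ) = u.factorial * (u + s).descFactorial s := by
    rw [← Nat.cast_mul, ← Nat.factorial_mul_descFactorial (Nat.le_add_left s u),
      Nat.add_sub_cancel]
  rw [hfac, ofReal_norm_sub_pow_two_mul, Nat.add_sub_cancel]
  field_simp
  ring

theorem stmt_15_general (n : ℕ) (hn : 1 ≤ n) (s : ℕ) (w : ℂ) :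
    (∀ z : ℂ, dbar^[s] (fun z' => FockK n z' w) z =
      (-1) ^ s * (z - w) ^ s * Complex.exp (z * (starRingEnd ℂ) w) *
        ∑ u ∈ Finset.range (n - s),
          ((-1) ^ u / (u.factorial : ℂ)) * (n.choose (u + s + 1)) *
            ((‖z - w‖ ^ (2 * u) : ℝ) : ℂ)) ∧
    (∀ z : ℂ, dbar^[n - 1] (fun z' => FockK n z' w) z =
      (-1) ^ (n - 1) * (z - w) ^ (n - 1) * Complex.exp (z * (starRingEnd ℂ) w)) := by
  refine ⟨iterate_dbar_FockK n s w, fun z => ?_⟩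
  rw [iterate_dbar_FockK, Nat.sub_sub_self hn, sum_range_one, zero_add, Nat.sub_add_cancel hn,
    Nat.choose_self]
  simp

theorem stmt_15 (n : ℕ) (hn : 1 ≤ n) (s : ℕ) (hs : s ≤ n - 1) (w : ℂ) :
    (∀ z : ℂ, dbar^[s] (fun z' => FockK n z' w) z =
      (-1) ^ s * (z - w) ^ s * Complex.exp (z * (starRingEnd ℂ) w) *
        ∑ u ∈ Finset.range (n - s),
          ((-1) ^ u / (u.factorial : ℂ)) * (n.choose (u + s + 1)) *
            ((‖z - w‖ ^ (2 * u) : ℝ) : ℂ)) ∧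
    (∀ z : ℂ, dbar^[n - 1] (fun z' => FockK n z' w) z =
      (-1) ^ (n - 1) * (z - w) ^ (n - 1) * Complex.exp (z * (starRingEnd ℂ) w)) :=
  stmt_15_general n hn s w
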